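/- Let A be a C*-algebra with a coaction δ of a locally compact group G, and let J = {a ∈ A : f·a = 0 for all f ∈ E}, where E is a weak*-closed G-invariant ideal of B(G) and f·a = (id ⊗ f)(δ(a)). Then the annihilator J⊥ in A* equals the weak*-closed span of {ω·f : ω ∈ A*, f ∈ E}, where ω·f = (ω ⊗ f)∘δ. -/

import Mathlib

/-!
The ideal `J` is the joint kernel of the functionals `ω·f` (`ω ∈ A*`, `f ∈ E`), because `A*`
separates the points of `A`. So the claim is the bipolar theorem for subspaces: the weak*-closed
span of a set `S` of functionals is the annihilator of its joint kernel. This follows from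
Hahn–Banach separation in the locally convex weak* topology, whose continuous functionals are
the evaluations at points of `A`.
-/

open RCLike

lemma Submodule.map_eq_zero_of_forall_re_lt {𝕜 V : Type*} [RCLike 𝕜] [AddCommGroup V]
    [Module 𝕜 V] (M : Submodule 𝕜 V) (f : V →ₗ[𝕜] 𝕜) {u : ℝ}
    (hu : ∀ y ∈ M, re (f y) < u) {y : V} (hy : y ∈ M) : f y = 0 := by
  by_contra hfy
  have hscaled : f (((u : 𝕜) / f y) • y) = u := by
    rw [map_smul, smul_eq_mul, div_mul_cancel₀ _ hfy]
  have := hu _ (M.smul_mem ((u : 𝕜) / f y) hy)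
  rw [hscaled, ofReal_re] at this
  exact this.false

lemma Submodule.exists_dual_map_eq_zero_of_notMem_topologicalClosure {𝕜 V : Type*} [RCLike 𝕜]
    [TopologicalSpace V] [AddCommGroup V] [Module ℝ V] [Module 𝕜 V] [IsScalarTower ℝ 𝕜 V]
    [IsTopologicalAddGroup V] [ContinuousSMul 𝕜 V] [LocallyConvexSpace ℝ V]
    (M : Submodule 𝕜 V) {x : V} (hx : x ∉ M.topologicalClosure) :
    ∃ f : StrongDual 𝕜 V, (∀ y ∈ M, f y = 0) ∧ f x ≠ 0 := by
  obtain ⟨f, u, hclosure, hx⟩ := RCLike.geometric_hahn_banach_closed_point (𝕜 := 𝕜)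
    (M.topologicalClosure.restrictScalars ℝ).convex M.isClosed_topologicalClosure hx
  have hM : ∀ y ∈ M, f y = 0 := fun y hy =>
    M.topologicalClosure.map_eq_zero_of_forall_re_lt f hclosure (M.le_topologicalClosure hy)
  refine ⟨f, hM, fun hfx => ?_⟩
  have h0 := hclosure 0 M.topologicalClosure.zero_mem
  rw [map_zero, zero_re] at h0
  rw [hfx, zero_re] at hx
  exact lt_asymm h0 hx

namespace WeakDual

variable {𝕜 V : Type*} [RCLike 𝕜] [AddCommGroup V] [TopologicalSpace V] [Module 𝕜 V]

lemma exists_eval_eq_zero_of_notMem_topologicalClosure (M : Submodule 𝕜 (WeakDual 𝕜 V))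
    {φ : WeakDual 𝕜 V} (hφ : φ ∉ M.topologicalClosure) :
    ∃ a : V, (∀ ψ ∈ M, ψ a = 0) ∧ φ a ≠ 0 := by
  have : IsScalarTower ℝ 𝕜 (WeakDual 𝕜 V) := inferInstanceAs (IsScalarTower ℝ 𝕜 (V →L[𝕜] 𝕜))
  have : LocallyConvexSpace ℝ (WeakDual 𝕜 V) :=
    inferInstanceAs (LocallyConvexSpace ℝ (WeakBilin (topDualPairing 𝕜 V)))
  obtain ⟨f, hM, hφ⟩ := M.exists_dual_map_eq_zero_of_notMem_topologicalClosure hφ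
  -- the continuous functionals of the weak* topology are the evaluations at points of `V`
  obtain ⟨a, rfl⟩ := LinearMap.dualEmbedding_surjective (topDualPairing 𝕜 V) f
  exact ⟨a, hM, hφ⟩

theorem coe_topologicalClosure_span (S : Set (WeakDual 𝕜 V)) :
    ((Submodule.span 𝕜 S).topologicalClosure : Set (WeakDual 𝕜 V)) =
      {φ | ∀ a : V, (∀ ψ ∈ S, ψ a = 0) → φ a = 0} := by
  ext φ
  refine ⟨fun hφ a ha => ?_, fun hφ => ?_⟩
  · let ker : Submodule 𝕜 (WeakDual 𝕜 V) := LinearMap.ker ((topDualPairing 𝕜 V).flip a)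
    have hspan : Submodule.span 𝕜 S ≤ ker := Submodule.span_le.2 ha
    exact Submodule.topologicalClosure_minimal _ hspan
      (isClosed_eq (eval_continuous a) continuous_const) hφ
  · by_contra hφ'
    obtain ⟨a, hspan, hφa⟩ := exists_eval_eq_zero_of_notMem_topologicalClosure _ hφ'
    exact hφa (hφ a fun ψ hψ => hspan ψ (Submodule.subset_span hψ))

end WeakDual

/-- `slice f : D → A` models the slice map `id ⊗ f`, so that `f·a = slice f (δ a)` and
`ω·f = ω ∘ slice f ∘ δ`. -/
theorem annihilator_of_killing_ideal_eq_weakStarClosure_span_general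
    {A D Cst : Type*}
    [NormedAddCommGroup A] [NormedSpace ℂ A]
    [NormedAddCommGroup D] [NormedSpace ℂ D]
    [NormedAddCommGroup Cst] [NormedSpace ℂ Cst]
    (δ : A →L[ℂ] D)
    (slice : WeakDual ℂ Cst → (D →L[ℂ] A))
    (E : Submodule ℂ (WeakDual ℂ Cst)) :
    {φ : WeakDual ℂ A | ∀ a : A, (∀ f ∈ E, slice f (δ a) = 0) → φ a = 0}
      = ((Submodule.span ℂ
          {φ : WeakDual ℂ A | ∃ (ω : A →L[ℂ] ℂ), ∃ f ∈ E,
            ∀ a : A, φ a = ω (slice f (δ a))}).topologicalClosure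
          : Set (WeakDual ℂ A)) := by
  rw [WeakDual.coe_topologicalClosure_span]
  refine Set.ext fun φ => forall_congr' fun a => imp_congr_left ⟨fun hJ ψ ⟨ω, f, hf, hψ⟩ => ?_,
    fun hS f hf => SeparatingDual.eq_zero_of_forall_dual_eq_zero (R := ℂ) fun ω => ?_⟩
  · rw [hψ a, hJ f hf, map_zero]
  · exact hS (ω.comp ((slice f).comp δ)) ⟨ω, f, hf, fun _ => rfl⟩

/-- Lemma 6.5(2) of the paper, abstract form.  `A` carries a coaction
`δ : A → M(A ⊗ C*(G))`, modelled by an isometry `δ : A → D`, together with slice maps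
`slice f : D → A` (`f` ranging over `B(G) = Cst*`, taken with its weak* topology), so
that `f·a = slice f (δ a)` and `ω·f = ω ∘ slice f ∘ δ`.  For a weak*-closed
`B(G)`-ideal `E` and `J = {a : f·a = 0 for all f ∈ E}`, the annihilator `J⊥ ⊆ A*`
equals the weak*-closed span of `{ω·f : ω ∈ A*, f ∈ E}`. -/
theorem annihilator_of_killing_ideal_eq_weakStarClosure_span
    {A D Cst : Type*}
    [NormedAddCommGroup A] [NormedSpace ℂ A]
    [NormedAddCommGroup D] [NormedSpace ℂ D]
    [NormedAddCommGroup Cst] [NormedSpace ℂ Cst]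
    (δ : A →L[ℂ] D) (hδ : ∀ a : A, ‖δ a‖ = ‖a‖)
    (slice : WeakDual ℂ Cst → (D →L[ℂ] A))
    (slice_add : ∀ f g, slice (f + g) = slice f + slice g)
    (slice_smul : ∀ (c : ℂ) f, slice (c • f) = c • slice f)
    -- the multiplication of `B(G)` and the hypotheses on `E`:
    (mulB : WeakDual ℂ Cst → WeakDual ℂ Cst → WeakDual ℂ Cst)
    (E : Submodule ℂ (WeakDual ℂ Cst))
    (hEclosed : IsClosed (E : Set (WeakDual ℂ Cst)))
    (hEideal : ∀ f ∈ E, ∀ g, mulB f g ∈ E ∧ mulB g f ∈ E) :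
    {φ : WeakDual ℂ A | ∀ a : A, (∀ f ∈ E, slice f (δ a) = 0) → φ a = 0}
      = ((Submodule.span ℂ
          {φ : WeakDual ℂ A | ∃ (ω : A →L[ℂ] ℂ), ∃ f ∈ E,
            ∀ a : A, φ a = ω (slice f (δ a))}).topologicalClosure
          : Set (WeakDual ℂ A)) :=
  annihilator_of_killing_ideal_eq_weakStarClosure_span_general δ slice E
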